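/- Let X ≥ 2, let 1 ≤ Q ≤ X/2, and let c > 0. Then for every α ∈ 𝔪(Q), ∑_{|x| ≤ cX} min{X, ‖xα‖^{−1}} ≪_c (log X)·Q^{−1}·X², where the sum runs over integers x with |x| ≤ cX. -/

import Mathlib

open Finset
open scoped BigOperators

noncomputable section

/-- major arcs `𝓜(Q)` (for the parameter `X`). -/
def majorArcs (X Q : ℝ) : Set ℝ :=
  {α : ℝ | ∃ q a : ℕ, 1 ≤ a ∧ a ≤ q ∧ (q : ℝ) ≤ Q ∧ Nat.gcd a q = 1 ∧
    |α - (a : ℝ) / (q : ℝ)| ≤ Q / ((q : ℝ) * X ^ 2)}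

/-- the arcs `𝔪(Q) = 𝓜(2Q) \ 𝓜(Q)`. -/
def minorArcsQ (X Q : ℝ) : Set ℝ := majorArcs X (2 * Q) \ majorArcs X Q

/-- distance to the nearest integer. -/
def distNearInt (θ : ℝ) : ℝ := |θ - round θ|

/-- `min {X, ‖θ‖⁻¹}`, with the convention that it equals `X` when `‖θ‖ = 0`. -/
def minPhi (X θ : ℝ) : ℝ := if distNearInt θ = 0 then X else min X (distNearInt θ)⁻¹

/-!
Write `α = a / q + β` with `q ≤ 2Q`, `(a, q) = 1` and `|β| ≤ 2Q / (q X²)`. For `|x| ≤ cX` we have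
`|x β| ≤ c / q`, so modulo `1` the point `x α` lies within `c / q` of `k / q`, where `k` is the
least absolute residue of `x a` modulo `q`. As `a` is invertible modulo `q`, each value of `k` is
taken on a single residue class, i.e. at most `2cX / q + 1` times.

If `|k| ≥ 2c` the term is at most `2q / |k|`, and summing over `k` gives `O((X + q) log q)`.
The remaining `x` lie in at most `4c + 1` residue classes. If `q > Q` we bound their terms by `X`.
Otherwise `α ∉ 𝓜(Q)` forces `|β| > Q / (q X²)`, so on each of these classes the points `x α`
modulo `1` are `q |β| > Q / X²` apart, and a spacing argument bounds their contribution by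
`O(X + (X² / Q) log X)`.
-/

open Real

theorem distNearInt_add_intCast (θ : ℝ) (n : ℤ) : distNearInt (θ + n) = distNearInt θ := by
  simp [distNearInt, round_add_intCast]

theorem minPhi_add_intCast (X θ : ℝ) (n : ℤ) : minPhi X (θ + n) = minPhi X θ := by
  simp only [minPhi, distNearInt_add_intCast]

theorem minPhi_le (X θ : ℝ) : minPhi X θ ≤ X := by
  unfold minPhi
  split_ifs
  exacts [le_rfl, min_le_left _ _]

theorem minPhi_le_inv {X θ t : ℝ} (ht : 0 < t) (h : t ≤ distNearInt θ) : minPhi X θ ≤ t⁻¹ := by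
  have hθ : distNearInt θ ≠ 0 := (ht.trans_le h).ne'
  rw [minPhi, if_neg hθ]
  exact (min_le_right _ _).trans (inv_anti₀ ht h)

theorem abs_sub_abs_le_distNearInt_add {θ : ℝ} (hθ : |θ| ≤ 1 / 2) (η : ℝ) :
    |θ| - |η| ≤ distNearInt (θ + η) := by
  set n := round (θ + η)
  have hn : |θ| ≤ |θ - n| := by
    rcases eq_or_ne n 0 with h | h
    · simp [h]
    · have h1 : (1 : ℝ) ≤ |(n : ℝ)| := by exact_mod_cast Int.one_le_abs h
      have h2 := abs_sub_abs_le_abs_sub (n : ℝ) θ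
      rw [abs_sub_comm] at h2
      linarith
  have h3 : |θ - n| ≤ |θ + η - n| + |η| := by
    simpa only [sub_right_comm, add_sub_cancel_right] using abs_sub (θ + η - n) η
  unfold distNearInt
  linarith

theorem le_abs_sub_of_dvd_sub {x y q : ℤ} (hne : x ≠ y) (h : q ∣ x - y) :
    (q : ℝ) ≤ |(x : ℝ) - y| := by
  have := Int.le_of_dvd (abs_pos.2 (sub_ne_zero.2 hne)) ((dvd_abs _ _).2 h)
  exact_mod_cast this

theorem abs_mul_le_of_mem_Icc {N x : ℤ} (hx : x ∈ Icc (-N) N) (β : ℝ) :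
    |(x : ℝ) * β| ≤ N * |β| := by
  rw [abs_mul]
  gcongr
  exact_mod_cast abs_le.2 (mem_Icc.1 hx)

/-! ### Separated points -/

theorem abs_sub_lt_of_floor_div_eq {a b δ : ℝ} (ha : 0 ≤ a) (hb : 0 ≤ b) (hδ : 0 < δ)
    (h : ⌊a / δ⌋₊ = ⌊b / δ⌋₊) : |a - b| < δ := by
  have h1 := Nat.floor_le (div_nonneg ha hδ.le)
  have h2 := Nat.floor_le (div_nonneg hb hδ.le)
  have h3 := Nat.lt_floor_add_one (a / δ)
  have h4 := Nat.lt_floor_add_one (b / δ)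
  rw [h] at h1 h3
  have h5 : |a / δ - b / δ| < 1 := by rw [abs_sub_lt_iff]; constructor <;> linarith
  rwa [← sub_div, abs_div, abs_of_pos hδ, div_lt_one hδ] at h5

theorem card_le_of_separated {ι : Type*} {s : Finset ι} {t : ι → ℝ} {u L δ : ℝ}
    (hδ : 0 < δ) (hL : 0 ≤ L) (hmem : ∀ i ∈ s, t i ∈ Set.Icc u (u + L))
    (hsep : ∀ i ∈ s, ∀ j ∈ s, i ≠ j → δ ≤ |t i - t j|) :
    (#s : ℝ) ≤ L / δ + 1 := by
  have hinj : Set.InjOn (fun i => ⌊(t i - u) / δ⌋₊) s := by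
    intro i hi j hj hij
    by_contra hne
    have h := abs_sub_lt_of_floor_div_eq (sub_nonneg.2 (hmem i hi).1)
      (sub_nonneg.2 (hmem j hj).1) hδ hij
    rw [sub_sub_sub_cancel_right] at h
    exact (hsep i hi j hj hne).not_gt h
  have hmaps : ∀ i ∈ s, ⌊(t i - u) / δ⌋₊ ∈ range (⌊L / δ⌋₊ + 1) := by
    intro i hi
    rw [mem_range, Nat.lt_succ_iff]
    exact Nat.floor_le_floor (div_le_div_of_nonneg_right (by linarith [(hmem i hi).2]) hδ.le)
  calc (#s : ℝ) ≤ ⌊L / δ⌋₊ + 1 := by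
        exact_mod_cast (card_le_card_of_injOn _ hmaps hinj).trans (card_range _).le
    _ ≤ L / δ + 1 := by gcongr; exact Nat.floor_le (by positivity)

theorem sum_le_mul_sum_of_card_fiber_le {ι κ : Type*} [DecidableEq κ] {s : Finset ι}
    {t : Finset κ} {g : ι → κ} {F : ι → ℝ} {f : κ → ℝ} {B : ℝ} (hg : ∀ i ∈ s, g i ∈ t)
    (hF : ∀ i ∈ s, F i ≤ f (g i)) (hf : ∀ k ∈ t, 0 ≤ f k)
    (hB : ∀ k ∈ t, (#{i ∈ s | g i = k} : ℝ) ≤ B) :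
    ∑ i ∈ s, F i ≤ B * ∑ k ∈ t, f k := by
  calc ∑ i ∈ s, F i ≤ ∑ i ∈ s, f (g i) := sum_le_sum hF
    _ = ∑ k ∈ t, #{i ∈ s | g i = k} * f k := by
        rw [← sum_fiberwise_of_maps_to hg]
        refine sum_congr rfl fun k _ => ?_
        rw [sum_congr rfl fun i hi => by rw [(mem_filter.1 hi).2], sum_const, nsmul_eq_mul]
    _ ≤ ∑ k ∈ t, B * f k := sum_le_sum fun k hk => by gcongr; exacts [hf k hk, hB k hk]
    _ = B * ∑ k ∈ t, f k := (mul_sum _ _ _).symm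

theorem sum_range_succ_inv_eq_harmonic (n : ℕ) :
    ∑ j ∈ range (n + 1), (j : ℝ)⁻¹ = harmonic n := by
  simp [sum_range_succ', harmonic]

theorem sum_Icc_abs_inv_le (n : ℕ) :
    ∑ k ∈ Icc (-(n : ℤ)) n, |(k : ℝ)|⁻¹ ≤ 2 * (1 + log n) := by
  have hfib : ∀ j ∈ range (n + 1), (#{k ∈ Icc (-(n : ℤ)) n | k.natAbs = j} : ℝ) ≤ 2 := by
    intro j _
    have hsub : {k ∈ Icc (-(n : ℤ)) n | k.natAbs = j} ⊆ {(j : ℤ), -(j : ℤ)} := by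
      intro k hk
      rw [← (mem_filter.1 hk).2]
      simpa only [mem_insert, mem_singleton] using Int.natAbs_eq k
    exact_mod_cast (card_le_card hsub).trans card_le_two
  calc ∑ k ∈ Icc (-(n : ℤ)) n, |(k : ℝ)|⁻¹
      ≤ 2 * ∑ j ∈ range (n + 1), (j : ℝ)⁻¹ := by
        refine sum_le_mul_sum_of_card_fiber_le (g := Int.natAbs) (fun k hk => ?_)
          (fun k _ => by simp [Nat.cast_natAbs]) (fun j _ => by positivity) hfib
        rw [mem_Icc] at hk
        rw [mem_range]
        omega
    _ ≤ 2 * (1 + log n) := by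
        rw [sum_range_succ_inv_eq_harmonic]
        gcongr
        exact harmonic_le_one_add_log n

theorem card_image_round_le {ι : Type*} {s : Finset ι} {t : ι → ℝ} {u L : ℝ} (hL : 0 ≤ L)
    (hmem : ∀ i ∈ s, t i ∈ Set.Icc u (u + L)) :
    (#(s.image fun i => round (t i)) : ℝ) ≤ L + 2 := by
  have := card_le_of_separated (s := s.image fun i => round (t i)) (t := fun n : ℤ => (n : ℝ))
    (u := u - 1 / 2) (L := L + 1) one_pos (by linarith) (fun n hn => ?_)
    fun m _ n _ hne => by simpa using le_abs_sub_of_dvd_sub hne (one_dvd _)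
  · linarith [div_one (L + 1)]
  · obtain ⟨i, hi, rfl⟩ := mem_image.1 hn
    have h1 := abs_le.1 (abs_sub_round (t i))
    have h2 := hmem i hi
    constructor <;> linarith [h2.1, h2.2]

theorem card_le_two_of_separated {ι : Type*} {s : Finset ι} {t : ι → ℝ} {δ : ℝ} {n : ℤ} {k : ℕ}
    (hδ : 0 < δ) (hsep : ∀ i ∈ s, ∀ j ∈ s, i ≠ j → δ ≤ |t i - t j|)
    (hs : ∀ i ∈ s, round (t i) = n ∧ ⌊distNearInt (t i) / δ⌋₊ = k) : #s ≤ 2 := by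
  have hside : ∀ i ∈ s, ∀ j ∈ s, ((n : ℝ) ≤ t i ↔ (n : ℝ) ≤ t j) → i = j := by
    intro i hi j hj hij
    by_contra hne
    have hd := abs_sub_lt_of_floor_div_eq (abs_nonneg _) (abs_nonneg _) hδ
      ((hs i hi).2.trans (hs j hj).2.symm)
    rw [(hs i hi).1, (hs j hj).1] at hd
    have heq : |t i - t j| = |(|t i - n| - |t j - n|)| := by
      rcases le_or_gt (n : ℝ) (t i) with h | h
      · rw [abs_of_nonneg (sub_nonneg.2 h), abs_of_nonneg (sub_nonneg.2 (hij.1 h))]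
        congr 1; ring
      · rw [abs_of_neg (sub_neg.2 h), abs_of_neg (sub_neg.2 (not_le.1 (mt hij.2 h.not_ge))),
          abs_sub_comm (t i)]
        congr 1; ring
    linarith [hsep i hi j hj hne]
  have h1 : #{i ∈ s | (n : ℝ) ≤ t i} ≤ 1 := card_le_one.2 fun i hi j hj => by
    rw [mem_filter] at hi hj
    exact hside i hi.1 j hj.1 (iff_of_true hi.2 hj.2)
  have h2 : #{i ∈ s | ¬ (n : ℝ) ≤ t i} ≤ 1 := card_le_one.2 fun i hi j hj => by
    rw [mem_filter] at hi hj
    exact hside i hi.1 j hj.1 (iff_of_false hi.2 hj.2)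
  rw [← card_filter_add_card_filter_not fun i => (n : ℝ) ≤ t i]
  omega

/-- Each point is filed under its nearest integer and `⌊‖t‖ / δ⌋`. By separation a bucket holds at
most one point on either side of its integer, and a point in bucket `k ≥ 1` contributes at most
`(k δ)⁻¹`. -/
theorem sum_minPhi_le_of_separated {ι : Type*} {s : Finset ι} {t : ι → ℝ} {X u L δ : ℝ}
    (hX : 0 ≤ X) (hδ : 0 < δ) (hδ1 : δ ≤ 1) (hL : 0 ≤ L)
    (hmem : ∀ i ∈ s, t i ∈ Set.Icc u (u + L))
    (hsep : ∀ i ∈ s, ∀ j ∈ s, i ≠ j → δ ≤ |t i - t j|) :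
    ∑ i ∈ s, minPhi X (t i) ≤ 2 * (L + 2) * (X + (1 + log δ⁻¹) / δ) := by
  classical
  set V := s.image fun i => round (t i)
  set J := ⌊δ⁻¹⌋₊
  let g : ι → ℤ × ℕ := fun i => (round (t i), ⌊distNearInt (t i) / δ⌋₊)
  let f : ℕ → ℝ := fun k => if k = 0 then X else (k * δ)⁻¹
  have hmaps : ∀ i ∈ s, g i ∈ V ×ˢ range (J + 1) := by
    intro i hi
    refine mem_product.2 ⟨mem_image_of_mem _ hi, mem_range.2 (Nat.lt_succ_of_le ?_)⟩
    refine Nat.floor_le_floor ?_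
    rw [div_eq_mul_inv]
    exact mul_le_of_le_one_left (by positivity) ((abs_sub_round (t i)).trans (by norm_num))
  have hF : ∀ i ∈ s, minPhi X (t i) ≤ f (g i).2 := by
    intro i _
    simp only [f, g]
    split_ifs with hk
    · exact minPhi_le X (t i)
    · apply minPhi_le_inv (by positivity)
      rw [← le_div_iff₀ hδ]
      exact Nat.floor_le (div_nonneg (abs_nonneg _) hδ.le)
  have hfib : ∀ p ∈ V ×ˢ range (J + 1), (#{i ∈ s | g i = p} : ℝ) ≤ 2 := fun p _ => by
    refine Nat.cast_le_ofNat.2 (card_le_two_of_separated (n := p.1) (k := p.2) hδ (fun i hi j hj =>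
      hsep i (mem_filter.1 hi).1 j (mem_filter.1 hj).1) fun i hi => ?_)
    have := (mem_filter.1 hi).2
    exact ⟨congrArg Prod.fst this, congrArg Prod.snd this⟩
  have hharm : (0 : ℝ) ≤ harmonic J := by rw [← sum_range_succ_inv_eq_harmonic]; positivity
  calc ∑ i ∈ s, minPhi X (t i) ≤ 2 * ∑ p ∈ V ×ˢ range (J + 1), f p.2 :=
        sum_le_mul_sum_of_card_fiber_le hmaps hF
          (fun p _ => by simp only [f]; split_ifs <;> positivity) hfib
    _ = 2 * (#V * (X + harmonic J / δ)) := by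
        rw [sum_product]
        simp only [sum_const, nsmul_eq_mul, sum_range_succ']
        congr 2
        simp [f, harmonic, div_eq_inv_mul, add_comm, mul_sum]
    _ ≤ 2 * ((L + 2) * (X + (1 + log δ⁻¹) / δ)) := by
        gcongr
        exacts [card_image_round_le hL hmem,
          harmonic_floor_le_one_add_log _ ((one_le_inv₀ hδ).2 hδ1)]
    _ = 2 * (L + 2) * (X + (1 + log δ⁻¹) / δ) := by ring

/-! ### Least residues -/

/-- Since this representative of `x * a` modulo `q` lies in `(-q/2, q/2]`, `‖x a / q‖` equals
`|leastResidue q a x| / q`. -/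
def leastResidue (q : ℕ) (a x : ℤ) : ℤ := ((x * a : ℤ) : ZMod q).valMinAbs

section LeastResidue

variable {q : ℕ} {a N : ℤ} {c β : ℝ}

theorem abs_leastResidue_div_le [NeZero q] (x : ℤ) : |(leastResidue q a x : ℝ) / q| ≤ 1 / 2 := by
  obtain ⟨h1, h2⟩ := ZMod.valMinAbs_mem_Ioc ((x * a : ℤ) : ZMod q)
  have h1' : -(q : ℝ) < leastResidue q a x * 2 := by exact_mod_cast h1
  have h2' : (leastResidue q a x : ℝ) * 2 ≤ q := by exact_mod_cast h2
  have hq : (0 : ℝ) < q := Nat.cast_pos.2 (NeZero.pos q)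
  rw [abs_le, le_div_iff₀ hq, div_le_iff₀ hq]
  constructor <;> linarith

theorem leastResidue_mem_Icc [NeZero q] (x : ℤ) : leastResidue q a x ∈ Icc (-(q : ℤ)) q := by
  obtain ⟨h1, h2⟩ := ZMod.valMinAbs_mem_Ioc ((x * a : ℤ) : ZMod q)
  rw [mem_Icc, leastResidue]
  omega

theorem exists_intCast_mul_div_eq [NeZero q] (x : ℤ) :
    ∃ n : ℤ, (x : ℝ) * (a / q) = leastResidue q a x / q + n := by
  obtain ⟨n, hn⟩ : (q : ℤ) ∣ x * a - leastResidue q a x := by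
    rw [← ZMod.intCast_eq_intCast_iff_dvd_sub, leastResidue, ZMod.coe_valMinAbs]
  refine ⟨n, ?_⟩
  have hq : (q : ℝ) ≠ 0 := Nat.cast_ne_zero.2 (NeZero.ne q)
  have hn' : (x : ℝ) * a - leastResidue q a x = q * n := by exact_mod_cast hn
  field_simp
  linarith

theorem minPhi_mul_eq [NeZero q] (X : ℝ) (x : ℤ) :
    minPhi X (x * (a / q + β)) = minPhi X (leastResidue q a x / q + x * β) := by
  obtain ⟨n, hn⟩ := exists_intCast_mul_div_eq (q := q) (a := a) x
  rw [mul_add, hn, add_right_comm, minPhi_add_intCast]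

theorem modEq_of_leastResidue_eq (ha : IsCoprime (q : ℤ) a) {x y : ℤ}
    (h : leastResidue q a x = leastResidue q a y) : x ≡ y [ZMOD q] := by
  rw [leastResidue, leastResidue, ZMod.valMinAbs_inj, ZMod.intCast_eq_intCast_iff_dvd_sub,
    ← sub_mul] at h
  exact Int.modEq_of_dvd (ha.dvd_of_dvd_mul_right h)

theorem card_le_of_leastResidue_eq [NeZero q] (ha : IsCoprime (q : ℤ) a) (hN : 0 ≤ N)
    {s : Finset ℤ} {k : ℤ} (hs : ∀ x ∈ s, x ∈ Icc (-N) N ∧ leastResidue q a x = k) :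
    (#s : ℝ) ≤ 2 * N / q + 1 := by
  refine card_le_of_separated (t := fun x : ℤ => (x : ℝ)) (u := -N)
    (Nat.cast_pos.2 (NeZero.pos q)) (by positivity) (fun x hx => ?_)
    fun x hx y hy hne => le_abs_sub_of_dvd_sub hne ?_
  · obtain ⟨h1, h2⟩ := mem_Icc.1 (hs x hx).1
    constructor
    · exact_mod_cast h1
    · have : (x : ℝ) ≤ N := by exact_mod_cast h2
      linarith
  · exact (modEq_of_leastResidue_eq ha ((hs x hx).2.trans (hs y hy).2.symm)).symm.dvd

theorem minPhi_mul_le_of_le_abs_leastResidue [NeZero q] (hc : 0 < c) {x : ℤ}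
    (hxβ : |x * β| ≤ c / q) (hx : 2 * c ≤ |(leastResidue q a x : ℝ)|) (X : ℝ) :
    minPhi X (x * (a / q + β)) ≤ 2 * q * |(leastResidue q a x : ℝ)|⁻¹ := by
  have hq : (0 : ℝ) < q := Nat.cast_pos.2 (NeZero.pos q)
  set k := (leastResidue q a x : ℝ)
  have hd := abs_sub_abs_le_distNearInt_add (abs_leastResidue_div_le (q := q) (a := a) x) (x * β)
  rw [abs_div, Nat.abs_cast] at hd
  have hlow : |k| / (2 * q) ≤ distNearInt (k / q + x * β) := by
    have : |k| / (2 * q) ≤ |k| / q - c / q := by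
      rw [div_sub_div_same, div_le_div_iff₀ (by positivity) hq]
      nlinarith
    linarith
  rw [minPhi_mul_eq]
  calc _ ≤ (|k| / (2 * q))⁻¹ := minPhi_le_inv (div_pos (by linarith) (by linarith)) hlow
    _ = 2 * q * |k|⁻¹ := by rw [inv_div, div_eq_mul_inv]

theorem sum_minPhi_le_of_le_abs_leastResidue [NeZero q] (ha : IsCoprime (q : ℤ) a) (hc : 0 < c)
    (hN : 0 ≤ N) (hNβ : N * |β| ≤ c / q) (X : ℝ) :
    ∑ x ∈ Icc (-N) N with 2 * c ≤ |(leastResidue q a x : ℝ)|, minPhi X (x * (a / q + β)) ≤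
      4 * (2 * N + q) * (1 + log q) := by
  have hq : (0 : ℝ) < q := Nat.cast_pos.2 (NeZero.pos q)
  calc _ ≤ (2 * N / q + 1) * ∑ k ∈ Icc (-(q : ℤ)) q, 2 * q * |(k : ℝ)|⁻¹ :=
        sum_le_mul_sum_of_card_fiber_le (fun x _ => leastResidue_mem_Icc x)
          (fun x hx => minPhi_mul_le_of_le_abs_leastResidue hc
            ((abs_mul_le_of_mem_Icc (mem_filter.1 hx).1 β).trans hNβ) (mem_filter.1 hx).2 X)
          (fun k _ => by positivity)
          fun k _ => card_le_of_leastResidue_eq ha hN fun x hx =>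
            ⟨(mem_filter.1 (mem_filter.1 hx).1).1, (mem_filter.1 hx).2⟩
    _ ≤ (2 * N / q + 1) * (2 * q * (2 * (1 + log q))) := by
        rw [← mul_sum]
        gcongr
        exact sum_Icc_abs_inv_le q
    _ = 4 * (2 * N + q) * (1 + log q) := by field_simp; ring

theorem sum_le_of_abs_leastResidue_lt (hc : 0 ≤ c) {s : Finset ℤ} {F : ℤ → ℝ} {B : ℝ}
    (hB0 : 0 ≤ B)
    (hB : ∀ k, ∑ x ∈ s with |(leastResidue q a x : ℝ)| < 2 * c ∧ leastResidue q a x = k, F x ≤ B) :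
    ∑ x ∈ s with |(leastResidue q a x : ℝ)| < 2 * c, F x ≤ (4 * c + 1) * B := by
  set bad := {x ∈ s | |(leastResidue q a x : ℝ)| < 2 * c}
  have hcard : (#(bad.image (leastResidue q a)) : ℝ) ≤ 4 * c + 1 := by
    have := card_le_of_separated (s := bad.image (leastResidue q a)) (t := fun k : ℤ => (k : ℝ))
      (u := -(2 * c)) (L := 4 * c) one_pos (by positivity) (fun k hk => ?_)
      fun m _ n _ hne => by simpa using le_abs_sub_of_dvd_sub hne (one_dvd _)
    · simpa using this
    · obtain ⟨x, hx, rfl⟩ := mem_image.1 hk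
      have := abs_lt.1 (mem_filter.1 hx).2
      constructor <;> linarith
  calc ∑ x ∈ bad, F x
      = ∑ k ∈ bad.image (leastResidue q a), ∑ x ∈ bad with leastResidue q a x = k, F x :=
        (sum_fiberwise_of_maps_to (fun x hx => mem_image_of_mem _ hx) _).symm
    _ ≤ ∑ k ∈ bad.image (leastResidue q a), B := sum_le_sum fun k _ => by
        simpa only [bad, filter_filter] using hB k
    _ ≤ (4 * c + 1) * B := by
        rw [sum_const, nsmul_eq_mul]
        gcongr

theorem sum_minPhi_le_of_leastResidue_eq [NeZero q] (ha : IsCoprime (q : ℤ) a) (hc : 0 ≤ c)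
    (hNβ : N * |β| ≤ c / q) (hβ : 0 < q * |β|) (hβ1 : q * |β| ≤ 1) {X : ℝ} (hX : 0 ≤ X)
    {s : Finset ℤ} {k : ℤ} (hs : ∀ x ∈ s, x ∈ Icc (-N) N ∧ leastResidue q a x = k) :
    ∑ x ∈ s, minPhi X (x * (a / q + β)) ≤
      2 * (2 * c / q + 2) * (X + (1 + log (q * |β|)⁻¹) / (q * |β|)) := by
  rw [sum_congr rfl fun x hx => by rw [minPhi_mul_eq, (hs x hx).2]]
  refine sum_minPhi_le_of_separated (u := k / q - c / q) hX hβ hβ1 (by positivity)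
    (fun x hx => ?_) fun x hx y hy hne => ?_
  · have := abs_le.1 ((abs_mul_le_of_mem_Icc (hs x hx).1 β).trans hNβ)
    constructor <;> linarith [mul_div_assoc 2 c (q : ℝ)]
  · have hxy := (modEq_of_leastResidue_eq ha ((hs x hx).2.trans (hs y hy).2.symm)).symm.dvd
    calc (q : ℝ) * |β| ≤ |(x : ℝ) - y| * |β| := by
          gcongr
          exact le_abs_sub_of_dvd_sub hne hxy
      _ = |(k / q + x * β) - (k / q + y * β)| := by rw [← abs_mul]; congr 1; ring

end LeastResidue

/-! ### The minor arcs -/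

theorem one_le_two_mul_log {X : ℝ} (hX : 2 ≤ X) : 1 ≤ 2 * log X := by
  linarith [log_le_log (by norm_num) hX, log_two_gt_d9]

section MinorArcs

variable {X Q c β : ℝ} {q : ℕ} [NeZero q] {a : ℤ}

theorem floor_mul_abs_le (hc : 0 < c) (hX : 0 < X) (hQX : Q ≤ X / 2)
    (hβ : |β| ≤ 2 * Q / (q * X ^ 2)) : (⌊c * X⌋ : ℝ) * |β| ≤ c / q := by
  have hq : (0 : ℝ) < q := Nat.cast_pos.2 (NeZero.pos q)
  calc (⌊c * X⌋ : ℝ) * |β| ≤ c * X * (2 * Q / (q * X ^ 2)) := by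
        gcongr
        exact Int.floor_le _
    _ = c / q * (2 * Q / X) := by field_simp
    _ ≤ c / q * 1 := by
        gcongr
        rw [div_le_one hX]
        linarith
    _ = c / q := mul_one _

theorem le_inv_mul_sq (hX : 0 ≤ X) (hQ : 0 < Q) (hQX : Q ≤ X) : X ≤ Q⁻¹ * X ^ 2 := by
  rw [inv_mul_eq_div, le_div_iff₀ hQ]
  nlinarith

theorem sum_largeResidue_le (hc : 0 < c) (hX : 2 ≤ X) (hQ : 1 ≤ Q) (hQX : Q ≤ X / 2)
    (hq : (q : ℝ) ≤ 2 * Q) (ha : IsCoprime (q : ℤ) a) (hβ : |β| ≤ 2 * Q / (q * X ^ 2)) :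
    ∑ x ∈ Icc (-⌊c * X⌋) ⌊c * X⌋ with 2 * c ≤ |(leastResidue q a x : ℝ)|,
        minPhi X (x * (a / q + β)) ≤ 24 * (c + 1) * log X * Q⁻¹ * X ^ 2 := by
  have hq1 : (1 : ℝ) ≤ q := Nat.one_le_cast.2 (NeZero.pos q)
  have hlog := one_le_two_mul_log hX
  have hlogq : log q ≤ log X := log_le_log (by linarith) (by linarith)
  have hXQ := le_inv_mul_sq (by linarith) (by linarith) (by linarith : Q ≤ X)
  refine (sum_minPhi_le_of_le_abs_leastResidue ha hc (Int.floor_nonneg.2 (by positivity))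
    (floor_mul_abs_le hc (by linarith) hQX hβ) X).trans ?_
  calc 4 * (2 * (⌊c * X⌋ : ℝ) + q) * (1 + log q) ≤ 4 * (2 * (c * X) + X) * (3 * log X) := by
        gcongr
        · exact Int.floor_le _
        · linarith
        · linarith
    _ ≤ 24 * (c + 1) * log X * (Q⁻¹ * X ^ 2) := by
        have : 0 ≤ log X := by linarith
        have : 0 ≤ c * log X := by positivity
        nlinarith
    _ = 24 * (c + 1) * log X * Q⁻¹ * X ^ 2 := by ring

theorem sum_smallResidue_le_of_lt (hc : 0 < c) (hX : 2 ≤ X) (hQ : 1 ≤ Q) (hQX : Q ≤ X / 2)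
    (ha : IsCoprime (q : ℤ) a) (hqQ : Q < q) :
    ∑ x ∈ Icc (-⌊c * X⌋) ⌊c * X⌋ with |(leastResidue q a x : ℝ)| < 2 * c,
        minPhi X (x * (a / q + β)) ≤ 96 * (c + 1) ^ 2 * log X * Q⁻¹ * X ^ 2 := by
  have hq : (0 : ℝ) < q := Nat.cast_pos.2 (NeZero.pos q)
  have hlog := one_le_two_mul_log hX
  have hXQ := le_inv_mul_sq (by linarith) (by linarith) (by linarith : Q ≤ X)
  have hP : 0 ≤ Q⁻¹ * X ^ 2 := by positivity
  have hN : 0 ≤ ⌊c * X⌋ := Int.floor_nonneg.2 (by positivity)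
  refine (sum_le_of_abs_leastResidue_lt hc.le (B := (2 * ⌊c * X⌋ / q + 1) * X) (by positivity)
    fun k => (sum_le_card_nsmul _ _ _ fun x _ => minPhi_le X _).trans ?_).trans ?_
  · rw [nsmul_eq_mul]
    gcongr
    exact card_le_of_leastResidue_eq ha hN fun x hx => by
      simp only [mem_filter] at hx
      exact ⟨hx.1, hx.2.2⟩
  have hNq : 2 * (⌊c * X⌋ : ℝ) / q ≤ 2 * c * X * Q⁻¹ := by
    rw [div_le_iff₀ hq, mul_assoc, mul_assoc]
    have : 1 ≤ Q⁻¹ * q := by rw [inv_mul_eq_div, le_div_iff₀ (by linarith)]; linarith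
    nlinarith [Int.floor_le (c * X), mul_le_mul_of_nonneg_left this (by positivity : 0 ≤ c * X)]
  calc (4 * c + 1) * ((2 * ⌊c * X⌋ / q + 1) * X)
      ≤ (4 * c + 1) * (2 * c * (Q⁻¹ * X ^ 2) + Q⁻¹ * X ^ 2) := by
        gcongr
        nlinarith
    _ ≤ (4 * c + 1) * ((2 * c + 1) * (2 * log X * (Q⁻¹ * X ^ 2))) := by
        gcongr
        nlinarith [mul_le_mul_of_nonneg_right hlog hP]
    _ ≤ 96 * (c + 1) ^ 2 * (log X * (Q⁻¹ * X ^ 2)) := by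
        nlinarith [mul_nonneg (by linarith : (0 : ℝ) ≤ log X) hP]
    _ = 96 * (c + 1) ^ 2 * log X * Q⁻¹ * X ^ 2 := by ring

theorem sum_smallResidue_le_of_lt_abs (hc : 0 < c) (hX : 2 ≤ X) (hQ : 1 ≤ Q) (hQX : Q ≤ X / 2)
    (ha : IsCoprime (q : ℤ) a) (hβ : |β| ≤ 2 * Q / (q * X ^ 2)) (hβQ : Q / (q * X ^ 2) < |β|) :
    ∑ x ∈ Icc (-⌊c * X⌋) ⌊c * X⌋ with |(leastResidue q a x : ℝ)| < 2 * c,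
        minPhi X (x * (a / q + β)) ≤ 96 * (c + 1) ^ 2 * log X * Q⁻¹ * X ^ 2 := by
  have hq1 : (1 : ℝ) ≤ q := Nat.one_le_cast.2 (NeZero.pos q)
  have hlog := one_le_two_mul_log hX
  have hXQ := le_inv_mul_sq (by linarith) (by linarith) (by linarith : Q ≤ X)
  have hP : 0 ≤ Q⁻¹ * X ^ 2 := by positivity
  have hδ0 : 0 < q * |β| :=
    mul_pos (by positivity) ((by positivity : 0 < Q / (q * X ^ 2)).trans hβQ)
  have hδ1 : q * |β| ≤ 1 := by
    rw [le_div_iff₀ (by positivity)] at hβ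
    nlinarith
  have hδinv : (q * |β|)⁻¹ ≤ Q⁻¹ * X ^ 2 := by
    rw [div_lt_iff₀ (by positivity)] at hβQ
    calc (q * |β|)⁻¹ ≤ (Q / X ^ 2)⁻¹ :=
          inv_anti₀ (by positivity) (by rw [div_le_iff₀ (by positivity)]; linarith)
      _ = Q⁻¹ * X ^ 2 := by rw [inv_div, div_eq_inv_mul]
  have hlogδ : log (q * |β|)⁻¹ ≤ 2 * log X := by
    calc log (q * |β|)⁻¹ ≤ log (X ^ 2) := by
          refine log_le_log (by positivity) (hδinv.trans ?_)
          exact mul_le_of_le_one_left (by positivity) (inv_le_one_of_one_le₀ hQ)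
      _ = 2 * log X := by rw [log_pow]; norm_num
  have hlogδ0 : 0 ≤ log (q * |β|)⁻¹ := log_nonneg ((one_le_inv₀ hδ0).2 hδ1)
  refine (sum_le_of_abs_leastResidue_lt hc.le (by positivity) fun k =>
    sum_minPhi_le_of_leastResidue_eq (k := k) ha hc.le (floor_mul_abs_le hc (by linarith) hQX hβ)
      hδ0 hδ1 (by linarith) fun x hx => ?_).trans ?_
  · simp only [mem_filter] at hx
    exact ⟨hx.1, hx.2.2⟩
  calc (4 * c + 1) * (2 * (2 * c / q + 2) * (X + (1 + log (q * |β|)⁻¹) / (q * |β|)))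
      ≤ (4 * c + 1) * (2 * (2 * c + 2) * (Q⁻¹ * X ^ 2 + (1 + 2 * log X) * (Q⁻¹ * X ^ 2))) := by
        rw [div_eq_mul_inv _ (q * |β| : ℝ)]
        gcongr
        exact div_le_self (by positivity) hq1
    _ ≤ (4 * c + 1) * (2 * (2 * c + 2) * (6 * (log X * (Q⁻¹ * X ^ 2)))) := by
        gcongr
        nlinarith [mul_le_mul_of_nonneg_right hlog hP]
    _ ≤ 96 * (c + 1) ^ 2 * (log X * (Q⁻¹ * X ^ 2)) := by
        nlinarith [mul_nonneg (by linarith : (0 : ℝ) ≤ log X) hP]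
    _ = 96 * (c + 1) ^ 2 * log X * Q⁻¹ * X ^ 2 := by ring

end MinorArcs

/-- For `α ∈ 𝔪(Q)`,
`∑_{|x| ≤ cX} min{X, ‖xα‖⁻¹} ≪_c (log X) Q⁻¹ X²`. -/
theorem statement7 (c : ℝ) (hc : 0 < c) :
    ∃ C : ℝ, 0 < C ∧ ∀ X Q : ℝ, 2 ≤ X → 1 ≤ Q → Q ≤ X / 2 →
      ∀ α ∈ minorArcsQ X Q,
        ∑ x ∈ Finset.Icc (-⌊c * X⌋) ⌊c * X⌋, minPhi X ((x : ℝ) * α) ≤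
          C * Real.log X * Q⁻¹ * X ^ 2 := by
  refine ⟨120 * (c + 1) ^ 2, by positivity, ?_⟩
  rintro X Q hX hQ hQX α ⟨⟨q, a, ha, haq, hq, hcop, hα⟩, hnot⟩
  have : NeZero q := ⟨by omega⟩
  obtain ⟨β, rfl⟩ : ∃ β, α = ((a : ℤ) : ℝ) / q + β := ⟨α - a / q, by push_cast; ring⟩
  have hβ : |β| ≤ 2 * Q / (q * X ^ 2) := by simpa using hα
  have hminor : Q < q ∨ Q / (q * X ^ 2) < |β| := by
    by_contra! h
    exact hnot ⟨q, a, ha, haq, h.1, hcop, by simpa using h.2⟩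
  have hcop' : IsCoprime (q : ℤ) (a : ℤ) :=
    Nat.isCoprime_iff_coprime.2 (Nat.coprime_comm.1 hcop)
  rw [← sum_filter_add_sum_filter_not _ fun x : ℤ => 2 * c ≤ |(leastResidue q a x : ℝ)|]
  simp only [not_le]
  have hE : 0 ≤ log X * Q⁻¹ * X ^ 2 := by
    have := one_le_two_mul_log hX
    exact mul_nonneg (mul_nonneg (by linarith) (by positivity)) (by positivity)
  calc _ ≤ 24 * (c + 1) * log X * Q⁻¹ * X ^ 2 + 96 * (c + 1) ^ 2 * log X * Q⁻¹ * X ^ 2 :=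
        add_le_add (sum_largeResidue_le hc hX hQ hQX (by linarith) hcop' hβ)
          (hminor.elim (sum_smallResidue_le_of_lt hc hX hQ hQX hcop')
            (sum_smallResidue_le_of_lt_abs hc hX hQ hQX hcop' hβ))
    _ ≤ 120 * (c + 1) ^ 2 * log X * Q⁻¹ * X ^ 2 := by
        nlinarith [mul_nonneg (mul_nonneg hc.le (by positivity : (0 : ℝ) ≤ c + 1)) hE]
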